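/- arXiv:2505.23489 — 4 statements merged into one kernel-verified Lean document; each statement's English description precedes it below -/
import Mathlib

section
/- For the scale-invariant losses f_1, f_2 of Theorem 1 evaluated on the unit sphere, the sum of gradients satisfies ‖g_1 + g_2‖² = 4(x² cos⁴ α + y² sin⁴ α − (x² cos² α + y² sin² α)²). -/
/-!
Writing `f_a(v) = ½⟪a, v⟫² / ‖v‖²`, scale invariance makes `∇f_a` orthogonal to `v`: on the unit
sphere it is the tangential part `w - ⟪w, v⟫ • v` of `w = ⟪a, v⟫ • a`. Tangential parts add, so
`‖g₁ + g₂‖² = ‖w‖² - ⟪w, v⟫²` with `w = ⟪a₁, v⟫ • a₁ + ⟪a₂, v⟫ • a₂`. For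
`a₁, a₂ = (cos α, ± sin α, 0)` this `w` is `2 (x cos² α, y sin² α, 0)`, and `⟪w, v⟫` is
`2 (x² cos² α + y² sin² α)`.
-/

open Real

open scoped RealInnerProductSpace

section ScaleInvariant

variable {E : Type*} [NormedAddCommGroup E] [InnerProductSpace ℝ E]

theorem norm_sub_inner_smul_sq_of_norm_eq_one (w : E) {v : E} (hv : ‖v‖ = 1) :
    ‖w - ⟪w, v⟫ • v‖ ^ 2 = ‖w‖ ^ 2 - ⟪w, v⟫ ^ 2 := by
  rw [norm_sub_sq_real, norm_smul, inner_smul_right, hv, mul_one, Real.norm_eq_abs, sq_abs]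
  ring

variable [CompleteSpace E]

theorem hasGradientAt_half_inner_sq_div_norm_sq (a : E) {v : E} (hv : v ≠ 0) :
    HasGradientAt (fun w => (1 / 2) * ⟪a, w⟫ ^ 2 / ‖w‖ ^ 2)
      ((⟪a, v⟫ / ‖v‖ ^ 2) • a - (⟪a, v⟫ ^ 2 / ‖v‖ ^ 4) • v) v := by
  have hv2 : ‖v‖ ^ 2 ≠ 0 := pow_ne_zero 2 (norm_ne_zero_iff.2 hv)
  have hnum := ((innerSL ℝ a).hasFDerivAt (x := v)).pow 2 |>.const_mul (1 / 2 : ℝ)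
  have hden := (hasDerivAt_inv hv2).comp_hasFDerivAt v (hasStrictFDerivAt_norm_sq v).hasFDerivAt
  refine ((hnum.mul hden).congr_fderiv ?_).congr_of_eventuallyEq
    (Filter.Eventually.of_forall fun w => div_eq_mul_inv _ _)
  ext w
  simp only [one_div, coe_innerSL_apply, neg_smul, smul_neg, Function.comp_apply,
    Nat.add_one_sub_one, pow_one, nsmul_eq_mul, Nat.cast_ofNat, add_apply,
    neg_apply, smul_apply, smul_eq_mul, map_sub, map_smul,
    sub_apply, InnerProductSpace.toDual_apply_apply]
  field_simp
  ring

theorem gradient_half_inner_sq_div_norm_sq_of_norm_eq_one (a : E) {v : E} (hv : ‖v‖ = 1) :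
    gradient (fun w => (1 / 2) * ⟪a, w⟫ ^ 2 / ‖w‖ ^ 2) v = ⟪a, v⟫ • a - ⟪a, v⟫ ^ 2 • v := by
  have hv₀ : v ≠ 0 := norm_ne_zero_iff.1 (hv ▸ one_ne_zero)
  rw [(hasGradientAt_half_inner_sq_div_norm_sq a hv₀).gradient, hv]
  simp only [one_pow, div_one]

theorem norm_sq_gradient_add_half_inner_sq_div_norm_sq (a b : E) {v : E} (hv : ‖v‖ = 1) :
    ‖gradient (fun w => (1 / 2) * ⟪a, w⟫ ^ 2 / ‖w‖ ^ 2) v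
        + gradient (fun w => (1 / 2) * ⟪b, w⟫ ^ 2 / ‖w‖ ^ 2) v‖ ^ 2
      = ‖⟪a, v⟫ • a + ⟪b, v⟫ • b‖ ^ 2 - (⟪a, v⟫ ^ 2 + ⟪b, v⟫ ^ 2) ^ 2 := by
  have hw : ⟪⟪a, v⟫ • a + ⟪b, v⟫ • b, v⟫ = ⟪a, v⟫ ^ 2 + ⟪b, v⟫ ^ 2 := by
    rw [inner_add_left, inner_smul_left, inner_smul_left]
    simp only [conj_trivial]
    ring
  rw [gradient_half_inner_sq_div_norm_sq_of_norm_eq_one a hv,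
    gradient_half_inner_sq_div_norm_sq_of_norm_eq_one b hv, ← hw,
    ← norm_sub_inner_smul_sq_of_norm_eq_one _ hv, hw]
  congr 2
  module

end ScaleInvariant

theorem EuclideanSpace.norm_sq_fin_three (w : EuclideanSpace ℝ (Fin 3)) :
    ‖w‖ ^ 2 = w 0 ^ 2 + w 1 ^ 2 + w 2 ^ 2 := by
  simp only [EuclideanSpace.norm_sq_eq, Real.norm_eq_abs, sq_abs, Fin.sum_univ_three]

theorem EuclideanSpace.inner_fin_three (u w : EuclideanSpace ℝ (Fin 3)) :
    ⟪u, w⟫ = w 0 * u 0 + w 1 * u 1 + w 2 * u 2 := by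
  simp only [PiLp.inner_apply, RCLike.inner_apply, conj_trivial, Fin.sum_univ_three]

theorem norm_sq_grad_sum_general (α : ℝ)
    (f₁ f₂ : EuclideanSpace ℝ (Fin 3) → ℝ)
    (hf₁ : ∀ v : EuclideanSpace ℝ (Fin 3),
      f₁ v = (1 / 2) * (v 0 * cos α + v 1 * sin α) ^ 2
        / ((v 0) ^ 2 + (v 1) ^ 2 + (v 2) ^ 2))
    (hf₂ : ∀ v : EuclideanSpace ℝ (Fin 3),
      f₂ v = (1 / 2) * (v 0 * cos α - v 1 * sin α) ^ 2
        / ((v 0) ^ 2 + (v 1) ^ 2 + (v 2) ^ 2))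
    (v : EuclideanSpace ℝ (Fin 3)) (hv : (v 0) ^ 2 + (v 1) ^ 2 + (v 2) ^ 2 = 1) :
    ‖gradient f₁ v + gradient f₂ v‖ ^ 2
      = 4 * ((v 0) ^ 2 * cos α ^ 4 + (v 1) ^ 2 * sin α ^ 4
          - ((v 0) ^ 2 * cos α ^ 2 + (v 1) ^ 2 * sin α ^ 2) ^ 2) := by
  set a₁ : EuclideanSpace ℝ (Fin 3) := !₂[cos α, sin α, 0]
  set a₂ : EuclideanSpace ℝ (Fin 3) := !₂[cos α, -sin α, 0]
  have hf₁' : f₁ = fun w => (1 / 2) * ⟪a₁, w⟫ ^ 2 / ‖w‖ ^ 2 := by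
    funext w
    simp [hf₁, a₁, EuclideanSpace.inner_fin_three, EuclideanSpace.norm_sq_fin_three]
  have hf₂' : f₂ = fun w => (1 / 2) * ⟪a₂, w⟫ ^ 2 / ‖w‖ ^ 2 := by
    funext w
    simp only [hf₂, a₂, EuclideanSpace.inner_fin_three, EuclideanSpace.norm_sq_fin_three,
      Matrix.cons_val_zero, Matrix.cons_val_one, Matrix.cons_val, mul_zero, add_zero, mul_neg]
    ring
  have hv' : ‖v‖ = 1 := by
    rw [← pow_eq_one_iff_of_nonneg (norm_nonneg v) two_ne_zero, EuclideanSpace.norm_sq_fin_three, hv]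
  rw [hf₁', hf₂', norm_sq_gradient_add_half_inner_sq_div_norm_sq a₁ a₂ hv',
    EuclideanSpace.norm_sq_fin_three]
  simp only [a₁, a₂, EuclideanSpace.inner_fin_three, Matrix.cons_val_zero, Matrix.cons_val_one,
    Matrix.cons_val, PiLp.add_apply, PiLp.smul_apply, smul_eq_mul]
  ring

/-- For the scale-invariant losses `f₁, f₂` on the unit sphere, the squared norm
of the sum of gradients is
`‖g₁ + g₂‖² = 4(x² cos⁴ α + y² sin⁴ α − (x² cos² α + y² sin² α)²)`. -/
theorem norm_sq_grad_sum (α : ℝ) (hα : 0 < α ∧ α < π / 4)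
    (f₁ f₂ : EuclideanSpace ℝ (Fin 3) → ℝ)
    (hf₁ : ∀ v : EuclideanSpace ℝ (Fin 3),
      f₁ v = (1 / 2) * (v 0 * cos α + v 1 * sin α) ^ 2
        / ((v 0) ^ 2 + (v 1) ^ 2 + (v 2) ^ 2))
    (hf₂ : ∀ v : EuclideanSpace ℝ (Fin 3),
      f₂ v = (1 / 2) * (v 0 * cos α - v 1 * sin α) ^ 2
        / ((v 0) ^ 2 + (v 1) ^ 2 + (v 2) ^ 2))
    (v : EuclideanSpace ℝ (Fin 3)) (hv : (v 0) ^ 2 + (v 1) ^ 2 + (v 2) ^ 2 = 1) :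
    ‖gradient f₁ v + gradient f₂ v‖ ^ 2
      = 4 * ((v 0) ^ 2 * cos α ^ 4 + (v 1) ^ 2 * sin α ^ 4
          - ((v 0) ^ 2 * cos α ^ 2 + (v 1) ^ 2 * sin α ^ 2) ^ 2) :=
  norm_sq_grad_sum_general α f₁ f₂ hf₁ hf₂ v hv
end

section
/- Fix 0 < r < 1 and 0 < α < π/4. Over φ ∈ [−α, α], the function SNR²(r,φ) = (sin² φ cos⁴ α + cos² φ sin⁴ α − r²(sin² φ cos² α + cos² φ sin² α)²)/(sin² α cos² α (1 − 4r² sin² φ cos² φ)) attains its minimum at φ = 0, with minimum value (1 − r²) tan² α. -/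
open Real

set_option maxHeartbeats 1000000

/-- Key polynomial inequality in `s = sin² φ`, `S = sin² α`. -/
lemma snr_key (s S r : ℝ) (hs0 : 0 ≤ s) (hsS : s ≤ S) (hS : 0 < S) (hS2 : S < 1/2)
    (hr0 : 0 ≤ r) (hr1 : r < 1) :
    (S ^ 2 - r ^ 2 * S ^ 2) * (S * (1 - S) * (1 - 4 * r ^ 2 * s * (1 - s)))
      ≤ (s * (1 - S) ^ 2 + (1 - s) * S ^ 2
          - r ^ 2 * (s * (1 - S) + (1 - s) * S) ^ 2) * (S * (1 - S)) := by
  have hG : 0 ≤ (1 - 2*S) * (1 - 2*r^2*S) - r^2 * s * (1 - 2*S)^2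
      + 4 * r^2 * (1 - r^2) * S^2 * (1 - s) := by
    have hr2 : r^2 < 1 := by nlinarith
    have hA : S * (3 - 2*S) < 1 := by nlinarith [mul_pos (by linarith : (0:ℝ) < 1 - 2*S) (by linarith : (0:ℝ) < 1 - S)]
    have h1 : r^2 * S * (3 - 2*S) < 1 := by
      nlinarith [mul_le_mul_of_nonneg_left hA.le (sq_nonneg r), mul_nonneg hS.le (by linarith : (0:ℝ) ≤ 3 - 2*S)]
    nlinarith [mul_nonneg (mul_nonneg (sq_nonneg r) (sub_nonneg.2 hsS)) (sq_nonneg (1 - 2*S)),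
      mul_nonneg (mul_nonneg (mul_nonneg (sq_nonneg r) (by nlinarith : (0:ℝ) ≤ 1 - r^2)) (sq_nonneg S)) (by linarith : (0:ℝ) ≤ 1 - s)]
  nlinarith [mul_nonneg (mul_nonneg (mul_nonneg hS.le (by linarith : (0:ℝ) ≤ 1 - S)) hs0) hG]

/-- For fixed `0 < r < 1` and `0 < α < π/4`, over `φ ∈ [−α, α]` the squared SNR
attains its minimum at `φ = 0`, with minimum value `(1 − r²) tan² α`. -/
theorem snr_sq_min_at_zero (α r : ℝ) (hα : 0 < α ∧ α < π / 4)
    (hr : 0 < r) (hr1 : r < 1) :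
    (∀ φ ∈ Set.Icc (-α) α,
      (sin (0:ℝ) ^ 2 * cos α ^ 4 + cos (0:ℝ) ^ 2 * sin α ^ 4
          - r ^ 2 * (sin (0:ℝ) ^ 2 * cos α ^ 2 + cos (0:ℝ) ^ 2 * sin α ^ 2) ^ 2)
        / (sin α ^ 2 * cos α ^ 2 * (1 - 4 * r ^ 2 * sin (0:ℝ) ^ 2 * cos (0:ℝ) ^ 2))
      ≤ (sin φ ^ 2 * cos α ^ 4 + cos φ ^ 2 * sin α ^ 4
          - r ^ 2 * (sin φ ^ 2 * cos α ^ 2 + cos φ ^ 2 * sin α ^ 2) ^ 2)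
        / (sin α ^ 2 * cos α ^ 2 * (1 - 4 * r ^ 2 * sin φ ^ 2 * cos φ ^ 2))) ∧
    (sin (0:ℝ) ^ 2 * cos α ^ 4 + cos (0:ℝ) ^ 2 * sin α ^ 4
          - r ^ 2 * (sin (0:ℝ) ^ 2 * cos α ^ 2 + cos (0:ℝ) ^ 2 * sin α ^ 2) ^ 2)
        / (sin α ^ 2 * cos α ^ 2 * (1 - 4 * r ^ 2 * sin (0:ℝ) ^ 2 * cos (0:ℝ) ^ 2))
      = (1 - r ^ 2) * tan α ^ 2 := by
  obtain ⟨hα0, hα4⟩ := hα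
  have hπ : (0:ℝ) < π := Real.pi_pos
  have hαπ : α < π / 2 := by linarith [Real.pi_pos]
  have hsinα : 0 < sin α := Real.sin_pos_of_pos_of_lt_pi hα0 (by linarith)
  have hcosα : 0 < cos α := Real.cos_pos_of_mem_Ioo ⟨by linarith, hαπ⟩
  have pα := Real.sin_sq_add_cos_sq α
  -- cos (2α) > 0 since 0 < 2α < π/2
  have hc2α : 0 < cos (2 * α) := Real.cos_pos_of_mem_Ioo ⟨by linarith, by linarith⟩
  have hS2 : sin α ^ 2 < 1 / 2 := by
    have := Real.cos_two_mul α
    nlinarith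
  constructor
  · intro φ hφ
    obtain ⟨hφ1, hφ2⟩ := hφ
    have pφ := Real.sin_sq_add_cos_sq φ
    -- sin² φ ≤ sin² α via cos (2φ) ≥ cos (2α)
    have habs : |2 * φ| ≤ 2 * α := by
      rw [abs_le]; constructor <;> linarith
    have hcos2 : cos (2 * α) ≤ cos (2 * φ) := by
      rw [← Real.cos_abs (2 * φ)]
      exact Real.cos_le_cos_of_nonneg_of_le_pi (abs_nonneg _) (by linarith) habs
    have hsφS : sin φ ^ 2 ≤ sin α ^ 2 := by
      have h1 := Real.cos_two_mul α
      have h2 := Real.cos_two_mul φ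
      nlinarith
    have hDφ : 0 < 1 - 4 * r ^ 2 * sin φ ^ 2 * cos φ ^ 2 := by
      have hr2 : r ^ 2 < 1 := by nlinarith
      have h4 : 4 * sin φ ^ 2 * cos φ ^ 2 ≤ 1 := by nlinarith [sq_nonneg (sin φ ^ 2 - cos φ ^ 2)]
      nlinarith [mul_le_mul_of_nonneg_left h4 (sq_nonneg r)]
    have hDα : 0 < sin α ^ 2 * cos α ^ 2 := by positivity
    simp only [Real.sin_zero, Real.cos_zero]
    rw [div_le_div_iff₀ (by nlinarith) (by positivity)]
    have hcα2 : cos α ^ 2 = 1 - sin α ^ 2 := by linarith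
    have hcφ2 : cos φ ^ 2 = 1 - sin φ ^ 2 := by linarith
    rw [show cos α ^ 4 = (cos α ^ 2) ^ 2 by ring, hcα2, hcφ2]
    have key := snr_key (sin φ ^ 2) (sin α ^ 2) r (sq_nonneg _) hsφS (by positivity) hS2
      hr.le hr1
    nlinarith [key]
  · simp only [Real.sin_zero, Real.cos_zero]
    rw [Real.tan_eq_sin_div_cos]
    field_simp
    ring
end

section
/- Fix 0 < α < π/4 and φ with |φ| ≤ α. The function t ↦ (M − Pt)/(1 − Qt), where M = sin² φ cos⁴ α + cos² φ sin⁴ α, P = (sin² φ cos² α + cos² φ sin² α)², Q = 4 sin² φ cos² φ, is non-increasing on t ∈ [0, 1); consequently SNR²(r,φ) is non-increasing in r² and converges upward to M/(sin² α cos² α) as r → 0⁺. -/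
set_option maxHeartbeats 400000


open Real Filter

/-- For fixed `0 < α < π/4` and `|φ| ≤ α`, the function `t ↦ (M − Pt)/(1 − Qt)`
is non-increasing on `[0, 1)`; consequently `SNR²(r,φ)` is non-increasing in
`r²` and converges upward to `M/(sin² α cos² α)` as `r → 0⁺`. -/
theorem snr_sq_antitone_and_limit (α φ : ℝ) (hα : 0 < α ∧ α < π / 4)
    (hφ : |φ| ≤ α)
    (M P Q : ℝ)
    (hM : M = sin φ ^ 2 * cos α ^ 4 + cos φ ^ 2 * sin α ^ 4)
    (hP : P = (sin φ ^ 2 * cos α ^ 2 + cos φ ^ 2 * sin α ^ 2) ^ 2)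
    (hQ : Q = 4 * sin φ ^ 2 * cos φ ^ 2) :
    AntitoneOn (fun t : ℝ => (M - P * t) / (1 - Q * t)) (Set.Ico 0 1) ∧
    Tendsto (fun r : ℝ =>
        (M - P * r ^ 2) / (sin α ^ 2 * cos α ^ 2 * (1 - Q * r ^ 2)))
      (nhdsWithin 0 (Set.Ioi 0)) (nhds (M / (sin α ^ 2 * cos α ^ 2))) ∧
    ∀ r ∈ Set.Ioo (0 : ℝ) 1,
      (M - P * r ^ 2) / (sin α ^ 2 * cos α ^ 2 * (1 - Q * r ^ 2))
        ≤ M / (sin α ^ 2 * cos α ^ 2) := by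
  obtain ⟨hα0, hα4⟩ := hα
  have hπ : (0:ℝ) < π := Real.pi_pos
  have hαlt : α < π / 2 := by linarith [Real.pi_pos]
  have hsinα : 0 < sin α := Real.sin_pos_of_pos_of_lt_pi hα0 (by linarith)
  have hcosα : 0 < cos α := Real.cos_pos_of_mem_Ioo ⟨by linarith, hαlt⟩
  -- |sin φ| ≤ sin α
  have hsφa : sin φ ^ 2 ≤ sin α ^ 2 := by
    have habs : |sin φ| = sin |φ| := by
      rcases le_or_gt 0 φ with h | h
      · rw [abs_of_nonneg h,
          abs_of_nonneg (Real.sin_nonneg_of_nonneg_of_le_pi h (by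
            have := abs_le.mp hφ; linarith))]
      · have hphi : -π ≤ φ := by have := abs_le.mp hφ; linarith
        rw [abs_of_neg h, Real.sin_neg,
          abs_of_nonpos (Real.sin_nonpos_of_nonpos_of_neg_pi_le h.le hphi)]
    have h1 : sin |φ| ≤ sin α := by
      apply Real.sin_le_sin_of_le_of_le_pi_div_two (by have := abs_nonneg φ; linarith) (by linarith) hφ
    have h2 : |sin φ| ≤ sin α := habs ▸ h1
    calc sin φ ^ 2 = |sin φ| ^ 2 := (sq_abs _).symm
      _ ≤ sin α ^ 2 := by nlinarith [abs_nonneg (sin φ)]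
  have hs2 : sin α ^ 2 ≤ 1 / 2 := by
    have : sin α ≤ sin (π / 4) :=
      Real.sin_le_sin_of_le_of_le_pi_div_two (by linarith) (by linarith) hα4.le
    rw [Real.sin_pi_div_four] at this
    nlinarith [Real.sqrt_nonneg 2, Real.sq_sqrt (by norm_num : (2:ℝ) ≥ 0)]
  have hsφ1 : sin φ ^ 2 + cos φ ^ 2 = 1 := Real.sin_sq_add_cos_sq φ
  have hsα1 : sin α ^ 2 + cos α ^ 2 = 1 := Real.sin_sq_add_cos_sq α
  have hsφ0 : 0 ≤ sin φ ^ 2 := sq_nonneg _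
  -- key inequality P - M*Q ≥ 0
  have hkey : M * Q ≤ P := by
    subst hM hP hQ
    set s := sin φ ^ 2 with hs
    set a := sin α ^ 2 with ha
    have hc : cos φ ^ 2 = 1 - s := by linarith
    have hb : cos α ^ 2 = 1 - a := by linarith
    rw [hc, hb]
    have h4 : cos α ^ 4 = (1 - a) ^ 2 := by rw [show (4:ℕ) = 2*2 from rfl, pow_mul, hb]
    have h4' : sin α ^ 4 = a ^ 2 := by rw [show (4:ℕ) = 2*2 from rfl, pow_mul]
    rw [h4, h4']
    have hu : 0 ≤ a - s := by linarith
    have key : (s * (1-a)^2 + (1-s) * a^2) * (4 * s * (1-s))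
        + ((a-s)^2 + 8 * s * (1-s) * (1/2 - a) * (a-s))
        = (s * (1-a) + (1-s) * a)^2 := by ring
    nlinarith [sq_nonneg (a - s),
      mul_nonneg (mul_nonneg (mul_nonneg (mul_nonneg (by norm_num : (0:ℝ) ≤ 8) hsφ0)
        (by linarith : (0:ℝ) ≤ 1 - s)) (by linarith : (0:ℝ) ≤ 1/2 - a)) hu]
  have hQ0 : 0 ≤ Q := by rw [hQ]; positivity
  have hQ1 : Q ≤ 1 := by
    rw [hQ]
    have hc : cos φ ^ 2 = 1 - sin φ ^ 2 := by linarith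
    rw [hc]
    nlinarith [sq_nonneg (1 - 2 * sin φ ^ 2)]
  have hden : ∀ t ∈ Set.Ico (0:ℝ) 1, 0 < 1 - Q * t := by
    intro t ht
    obtain ⟨ht0, ht1⟩ := ht
    have : Q * t ≤ 1 * t := mul_le_mul_of_nonneg_right hQ1 ht0
    linarith
  have hanti : AntitoneOn (fun t : ℝ => (M - P * t) / (1 - Q * t)) (Set.Ico 0 1) := by
    intro s hs t ht hst
    have hds := hden s hs
    have hdt := hden t ht
    rw [div_le_div_iff₀ hdt hds]
    nlinarith [mul_nonneg (sub_nonneg.2 hkey) (sub_nonneg.2 hst)]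
  have hD : 0 < sin α ^ 2 * cos α ^ 2 := by positivity
  refine ⟨hanti, ?_, ?_⟩
  · have hc : ContinuousAt (fun r : ℝ =>
        (M - P * r ^ 2) / (sin α ^ 2 * cos α ^ 2 * (1 - Q * r ^ 2))) 0 := by
      apply ContinuousAt.div
      · fun_prop
      · fun_prop
      · have h : sin α ^ 2 * cos α ^ 2 * (1 - Q * (0:ℝ) ^ 2)
            = sin α ^ 2 * cos α ^ 2 := by norm_num
        rw [h]; positivity
    have := hc.tendsto
    have h0 : ((M - P * 0 ^ 2) / (sin α ^ 2 * cos α ^ 2 * (1 - Q * 0 ^ 2)))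
        = M / (sin α ^ 2 * cos α ^ 2) := by norm_num
    rw [h0] at this
    exact this.mono_left nhdsWithin_le_nhds
  · intro r hr
    obtain ⟨hr0, hr1⟩ := hr
    have hmem : r ^ 2 ∈ Set.Ico (0:ℝ) 1 := ⟨sq_nonneg r, by nlinarith⟩
    have h0mem : (0:ℝ) ∈ Set.Ico (0:ℝ) 1 := ⟨le_refl _, by norm_num⟩
    have := hanti h0mem hmem (sq_nonneg r)
    simp only [mul_zero, sub_zero, div_one] at this
    have hd := hden _ hmem
    rw [div_le_div_iff₀ (by positivity) hD]
    calc (M - P * r ^ 2) * (sin α ^ 2 * cos α ^ 2)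
        ≤ M * (1 - Q * r ^ 2) * (sin α ^ 2 * cos α ^ 2) := by
          nlinarith [(div_le_iff₀ hd).mp this]
      _ = M * (sin α ^ 2 * cos α ^ 2 * (1 - Q * r ^ 2)) := by ring
end

section
/- Let M = S(1−R)² + (1−S)R², P = (S(1−R) + (1−S)R)², Q = 4S(1−S) with 0 ≤ S ≤ R < 1/2. Then MQ − P = (S − R)(8RS² − 8RS + R − 4S² + 3S) ≤ 0. -/
/-- With `M = S(1−R)² + (1−S)R²`, `P = (S(1−R) + (1−S)R)²`, `Q = 4S(1−S)` and
`0 ≤ S ≤ R < 1/2`, one has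
`MQ − P = (S − R)(8RS² − 8RS + R − 4S² + 3S) ≤ 0`. -/
theorem MQ_sub_P_factorization (S R : ℝ)
    (hS : 0 ≤ S) (hSR : S ≤ R) (hR : R < 1 / 2) :
    (S * (1 - R) ^ 2 + (1 - S) * R ^ 2) * (4 * S * (1 - S))
        - (S * (1 - R) + (1 - S) * R) ^ 2
      = (S - R) * (8 * R * S ^ 2 - 8 * R * S + R - 4 * S ^ 2 + 3 * S) ∧
    (S * (1 - R) ^ 2 + (1 - S) * R ^ 2) * (4 * S * (1 - S))
        - (S * (1 - R) + (1 - S) * R) ^ 2 ≤ 0 := by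
  constructor
  · ring
  · nlinarith [sq_nonneg (S - R), sq_nonneg (S + R), sq_nonneg (1 - 2*R), sq_nonneg (1 - 2*S), mul_nonneg hS (sub_nonneg.2 hSR), sq_nonneg (R - S*(2*R-1)), sq_nonneg S]
end
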